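/- arXiv:2104.07822 — 5 statements merged into one kernel-verified Lean document; each statement's English description precedes it below -/
import Mathlib

section
/- Let π^R be defined by π^R(x) = 1{L(x) > 0} − 1{U(x) < 0} + 1{L(x) ≤ 0 ≤ U(x)}·π^b(x). Then for every x ∈ 𝒳 and every action a ∈ {−1,+1}, sup_{c ∈ [L(x),U(x)]} |c|·(1{π^R(x) ≠ sgn(c)} − 1{π^b(x) ≠ sgn(c)}) ≤ sup_{c ∈ [L(x),U(x)]} |c|·(1{a ≠ sgn(c)} − 1{π^b(x) ≠ sgn(c)}). Consequently, π^R minimizes π ↦ E[ sup_{c ∈ [L(X),U(X)]} |c|·(1{π(X) ≠ sgn(c)} − 1{π^b(X) ≠ sgn(c)}) ] over all ITRs π : 𝒳 → {−1,+1} for which this expectation is defined; that is, π^R is a risk-based IV-improved ITR when the policy class consists of all Boolean functions. (Proposition 1.) -/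
open MeasureTheory

noncomputable section

open Classical in
/-- Real-valued indicator `1{p}` of a proposition. -/
noncomputable def ind (p : Prop) : ℝ := if p then 1 else 0

/-- Sign function: `+1` for positive, `−1` for negative, `0` at zero. -/
noncomputable def sgn (c : ℝ) : ℝ := if 0 < c then 1 else if c < 0 then -1 else 0

/-- Worst-case excess risk of taking action `b` against the baseline action `b0`,
the supremum over CATE values `c ∈ [L, U]` of `|c|·(1{b ≠ sgn c} − 1{b0 ≠ sgn c})`. -/
noncomputable def worstExcess (L U b b0 : ℝ) : ℝ :=
  sSup ((fun c => |c| * (ind (b ≠ sgn c) - ind (b0 ≠ sgn c))) '' Set.Icc L U)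

/-- The risk-based IV-improved ITR
`π^R(x) = 1{L(x) > 0} − 1{U(x) < 0} + 1{L(x) ≤ 0 ≤ U(x)}·π^b(x)`. -/
noncomputable def piR {𝒳 : Type*} (L U πb : 𝒳 → ℝ) (x : 𝒳) : ℝ :=
  ind (0 < L x) - ind (U x < 0) + ind (L x ≤ 0 ∧ 0 ≤ U x) * πb x

/-!
If `[L, U]` lies on one side of zero, `sgn c` is constant on it and that action minimizes every
pointwise loss `|c| * (1{a ≠ sgn c} - 1{πb ≠ sgn c})`. Otherwise `c = 0` is admissible, so every
action has nonnegative worst-case excess risk, whereas following the baseline has excess risk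
zero. Integrating the pointwise inequality gives the second claim.
-/

open Set

def excess (b b0 c : ℝ) : ℝ := |c| * (ind (b ≠ sgn c) - ind (b0 ≠ sgn c))

lemma worstExcess_eq (L U b b0 : ℝ) : worstExcess L U b b0 = sSup (excess b b0 '' Icc L U) :=
  rfl

lemma ind_nonneg (p : Prop) : 0 ≤ ind p := by unfold ind; split <;> norm_num

lemma ind_le_one (p : Prop) : ind p ≤ 1 := by unfold ind; split <;> norm_num

lemma sgn_of_pos {c : ℝ} (hc : 0 < c) : sgn c = 1 := if_pos hc

lemma sgn_of_neg {c : ℝ} (hc : c < 0) : sgn c = -1 := by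
  rw [sgn, if_neg hc.not_gt, if_pos hc]

lemma excess_le_abs (b b0 c : ℝ) : excess b b0 c ≤ |c| := by
  have hdiff : ind (b ≠ sgn c) - ind (b0 ≠ sgn c) ≤ 1 := by
    linarith [ind_le_one (b ≠ sgn c), ind_nonneg (b0 ≠ sgn c)]
  simpa [excess] using mul_le_mul_of_nonneg_left hdiff (abs_nonneg c)

lemma excess_self (b c : ℝ) : excess b b c = 0 := by simp [excess]

lemma excess_zero (b b0 : ℝ) : excess b b0 0 = 0 := by simp [excess]

lemma excess_sgn_le (b b0 c : ℝ) : excess (sgn c) b0 c ≤ excess b b0 c := by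
  have hsgn : ind (sgn c ≠ sgn c) = 0 := by simp [ind]
  unfold excess
  rw [hsgn]
  gcongr
  linarith [ind_nonneg (b ≠ sgn c)]

lemma bddAbove_excess_image (L U b b0 : ℝ) : BddAbove (excess b b0 '' Icc L U) := by
  refine ⟨max |L| |U|, ?_⟩
  rintro _ ⟨c, hc, rfl⟩
  exact (excess_le_abs b b0 c).trans (abs_le_max_abs_abs hc.1 hc.2)

lemma worstExcess_of_lt {L U : ℝ} (h : U < L) (b b0 : ℝ) : worstExcess L U b b0 = 0 := by
  rw [worstExcess_eq, Icc_eq_empty_of_lt h, image_empty, Real.sSup_empty]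

lemma worstExcess_mono {L U b b' b0 : ℝ}
    (h : ∀ c ∈ Icc L U, excess b b0 c ≤ excess b' b0 c) :
    worstExcess L U b b0 ≤ worstExcess L U b' b0 := by
  rcases lt_or_ge U L with hUL | hLU
  · rw [worstExcess_of_lt hUL, worstExcess_of_lt hUL]
  · refine csSup_le ((nonempty_Icc.2 hLU).image _) ?_
    rintro _ ⟨c, hc, rfl⟩
    exact (h c hc).trans (le_csSup (bddAbove_excess_image L U b' b0) ⟨c, hc, rfl⟩)

lemma worstExcess_le_of_sgn_eq {L U s : ℝ} (hs : ∀ c ∈ Icc L U, sgn c = s) (b b0 : ℝ) :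
    worstExcess L U s b0 ≤ worstExcess L U b b0 :=
  worstExcess_mono fun c hc => hs c hc ▸ excess_sgn_le b b0 c

lemma worstExcess_self_nonpos (L U b : ℝ) : worstExcess L U b b ≤ 0 := by
  refine Real.sSup_nonpos ?_
  rintro _ ⟨c, -, rfl⟩
  exact (excess_self b c).le

lemma worstExcess_nonneg {L U : ℝ} (hL : L ≤ 0) (hU : 0 ≤ U) (b b0 : ℝ) :
    0 ≤ worstExcess L U b b0 :=
  Real.sSup_nonneg' ⟨0, ⟨0, ⟨hL, hU⟩, excess_zero b b0⟩, le_rfl⟩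

lemma worstExcess_piR_le {𝒳 : Type*} (L U πb : 𝒳 → ℝ) (x : 𝒳) (a : ℝ) :
    worstExcess (L x) (U x) (piR L U πb x) (πb x) ≤ worstExcess (L x) (U x) a (πb x) := by
  rcases lt_or_ge (U x) (L x) with hUL | hLU
  · simp only [worstExcess_of_lt hUL, le_refl]
  by_cases hL : 0 < L x
  · have hpiR : piR L U πb x = 1 := by
      simp [piR, ind, hL, hL.not_ge, (hL.trans_le hLU).not_gt]
    rw [hpiR]
    exact worstExcess_le_of_sgn_eq (fun c hc => sgn_of_pos (hL.trans_le hc.1)) a _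
  by_cases hU : U x < 0
  · have hpiR : piR L U πb x = -1 := by
      simp [piR, ind, hL, hU, hU.not_ge]
    rw [hpiR]
    exact worstExcess_le_of_sgn_eq (fun c hc => sgn_of_neg (hc.2.trans_lt hU)) a _
  · rw [not_lt] at hL hU
    have hpiR : piR L U πb x = πb x := by simp [piR, ind, hL, hU, hL.not_gt, hU.not_gt]
    rw [hpiR]
    exact (worstExcess_self_nonpos _ _ _).trans (worstExcess_nonneg hL hU a _)

theorem risk_based_IV_improved_ITR_general
    {𝒳 : Type*} [MeasurableSpace 𝒳] (μ : Measure 𝒳)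
    (L U πb : 𝒳 → ℝ) :
    (∀ x, ∀ a : ℝ, a = 1 ∨ a = -1 →
        worstExcess (L x) (U x) (piR L U πb x) (πb x) ≤ worstExcess (L x) (U x) a (πb x))
    ∧
    (∀ π : 𝒳 → ℝ, (∀ x, π x = 1 ∨ π x = -1) →
        Integrable (fun x => worstExcess (L x) (U x) (piR L U πb x) (πb x)) μ →
        Integrable (fun x => worstExcess (L x) (U x) (π x) (πb x)) μ →
        ∫ x, worstExcess (L x) (U x) (piR L U πb x) (πb x) ∂μ ≤
          ∫ x, worstExcess (L x) (U x) (π x) (πb x) ∂μ) :=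
  ⟨fun x a _ => worstExcess_piR_le L U πb x a,
    fun π _ hR hπ => integral_mono hR hπ fun x => worstExcess_piR_le L U πb x (π x)⟩

/-- Proposition 1: `π^R` pointwise minimizes the worst-case excess risk over actions
`a ∈ {−1,+1}`, and consequently minimizes the expected worst-case excess risk over all
Boolean ITRs for which the expectation is defined: it is a risk-based IV-improved ITR. -/
theorem risk_based_IV_improved_ITR
    {𝒳 : Type*} [MeasurableSpace 𝒳] (μ : Measure 𝒳) [IsProbabilityMeasure μ]
    (L U πb : 𝒳 → ℝ)
    (hLU : ∀ x, L x ≤ U x)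
    (hπb : ∀ x, πb x = 1 ∨ πb x = -1) :
    (∀ x, ∀ a : ℝ, a = 1 ∨ a = -1 →
        worstExcess (L x) (U x) (piR L U πb x) (πb x) ≤ worstExcess (L x) (U x) a (πb x))
    ∧
    (∀ π : 𝒳 → ℝ, (∀ x, π x = 1 ∨ π x = -1) →
        Integrable (fun x => worstExcess (L x) (U x) (piR L U πb x) (πb x)) μ →
        Integrable (fun x => worstExcess (L x) (U x) (π x) (πb x)) μ →
        ∫ x, worstExcess (L x) (U x) (piR L U πb x) (πb x) ∂μ ≤
          ∫ x, worstExcess (L x) (U x) (π x) (πb x) ∂μ) :=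
  risk_based_IV_improved_ITR_general μ L U πb

end
end

section
/- Define L^V(x) = Q̲(x,+1) − Q̄(x,−1) and U^V(x) = Q̄(x,+1) − Q̲(x,−1), and let π^V(x) = 1{L^V(x) > 0} − 1{U^V(x) < 0} + 1{L^V(x) ≤ 0 ≤ U^V(x)}·π^b(x). For an ITR π and x ∈ 𝒳, let W(π, x) denote the infimum, over p ∈ 𝒫_{x,π(x)} and p' ∈ 𝒫_{x,π^b(x)} with the requirement that p' = p whenever π(x) = π^b(x), of ∫ y dp(y) − ∫ y dp'(y); equivalently W(π,x) = 0 if π(x) = π^b(x) and W(π,x) = Q̲(x,π(x)) − Q̄(x,π^b(x)) otherwise. Then for every x ∈ 𝒳 and every ITR π, W(π, x) ≤ W(π^V, x); consequently π^V maximizes π ↦ E[W(π, X)] over all ITRs for which the expectation is defined, i.e., π^V is a value-based IV-improved ITR when the policy class consists of all Boolean functions. (Proposition 2.) -/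
open MeasureTheory

noncomputable section

/-- Mean `∫ y dp(y)` of a distribution on ℝ. -/
noncomputable def meanOf (p : Measure ℝ) : ℝ := ∫ y, y ∂p

/-- `Q̲(x,a) = inf_{p ∈ 𝒫_{x,a}} ∫ y dp(y)`. -/
noncomputable def Qlow {𝒳 : Type*} (P : 𝒳 → ℝ → Set (Measure ℝ)) (x : 𝒳) (a : ℝ) : ℝ :=
  sInf (meanOf '' P x a)

/-- `Q̄(x,a) = sup_{p ∈ 𝒫_{x,a}} ∫ y dp(y)`. -/
noncomputable def Qhigh {𝒳 : Type*} (P : 𝒳 → ℝ → Set (Measure ℝ)) (x : 𝒳) (a : ℝ) : ℝ :=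
  sSup (meanOf '' P x a)

/-- `W(π,x)`: the infimum over `p ∈ 𝒫_{x,π(x)}` and `p' ∈ 𝒫_{x,π^b(x)}` (with `p' = p`
required whenever `π(x) = π^b(x)`) of `∫ y dp − ∫ y dp'`. -/
noncomputable def Winf {𝒳 : Type*} (P : 𝒳 → ℝ → Set (Measure ℝ)) (πb : 𝒳 → ℝ)
    (π : 𝒳 → ℝ) (x : 𝒳) : ℝ :=
  sInf {v : ℝ | ∃ p ∈ P x (π x), ∃ p' ∈ P x (πb x),
    (π x = πb x → p' = p) ∧ v = meanOf p - meanOf p'}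

/-- The value-based IV-improved ITR `π^V`, built from
`L^V(x) = Q̲(x,+1) − Q̄(x,−1)` and `U^V(x) = Q̄(x,+1) − Q̲(x,−1)`:
`π^V(x) = 1{L^V(x) > 0} − 1{U^V(x) < 0} + 1{L^V(x) ≤ 0 ≤ U^V(x)}·π^b(x)`. -/
noncomputable def piV {𝒳 : Type*} (P : 𝒳 → ℝ → Set (Measure ℝ)) (πb : 𝒳 → ℝ) (x : 𝒳) : ℝ :=
  ind (0 < Qlow P x 1 - Qhigh P x (-1)) - ind (Qhigh P x 1 - Qlow P x (-1) < 0)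
    + ind (Qlow P x 1 - Qhigh P x (-1) ≤ 0 ∧ 0 ≤ Qhigh P x 1 - Qlow P x (-1)) * πb x

/-! `W(π, x)` depends on `π` only through `π x`: it is `0` on the baseline action and, off it,
the infimum of all mean differences, i.e. the worst-case gain `Q̲(x, π x) − Q̄(x, π^b x)` of
switching. `π^V` switches exactly when that worst-case gain is positive, and otherwise switching
has a nonpositive worst case, so `π^V` maximizes `W(·, x)` pointwise; integrate. -/

open scoped Pointwise

theorem Real.sInf_le_sSup_of_mem {s : Set ℝ} (hinf : sInf s ∈ s) (hsup : sSup s ∈ s) :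
    sInf s ≤ sSup s := by
  by_cases hs : BddAbove s
  · exact le_csSup hs hinf
  · have hsup0 : sSup s = 0 := Real.sSup_of_not_bddAbove hs
    exact hsup0 ▸ Real.sInf_nonpos' ⟨sSup s, hsup, hsup0.le⟩

theorem Real.sInf_sub_nonneg {s t : Set ℝ} (hs : s.Nonempty) (ht : t.Nonempty)
    (h : sSup t ≤ sInf s) : 0 ≤ sInf (s - t) := by
  by_cases hst : BddBelow (s - t)
  swap
  · exact (Real.sInf_of_not_bddBelow hst).ge
  obtain ⟨c, hc⟩ := hst
  obtain ⟨a₀, ha₀⟩ := hs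
  obtain ⟨b₀, hb₀⟩ := ht
  have hs_bdd : BddBelow s :=
    ⟨c + b₀, fun a ha => by linarith [hc (Set.sub_mem_sub ha hb₀)]⟩
  have ht_bdd : BddAbove t :=
    ⟨a₀ - c, fun b hb => by linarith [hc (Set.sub_mem_sub ha₀ hb)]⟩
  rw [csInf_sub ⟨a₀, ha₀⟩ hs_bdd ⟨b₀, hb₀⟩ ht_bdd]
  exact sub_nonneg.2 h

section Pointwise

variable {𝒳 : Type*} {P : 𝒳 → ℝ → Set (Measure ℝ)} {πb π π' : 𝒳 → ℝ} {x : 𝒳}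

theorem Winf_congr (h : π x = π' x) : Winf P πb π x = Winf P πb π' x := by
  simp only [Winf, h]

theorem Winf_of_eq (h : π x = πb x) (hne : (P x (πb x)).Nonempty) : Winf P πb π x = 0 := by
  have hset : {v : ℝ | ∃ p ∈ P x (π x), ∃ p' ∈ P x (πb x),
      (π x = πb x → p' = p) ∧ v = meanOf p - meanOf p'} = {0} := by
    ext v
    constructor
    · rintro ⟨p, -, p', -, hp', rfl⟩
      simp [hp' h]
    · rintro rfl
      obtain ⟨p, hp⟩ := hne
      exact ⟨p, h ▸ hp, p, hp, fun _ => rfl, (sub_self _).symm⟩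
  rw [Winf, hset, csInf_singleton]

theorem Winf_of_ne (h : π x ≠ πb x) :
    Winf P πb π x = sInf (meanOf '' P x (π x) - meanOf '' P x (πb x)) := by
  unfold Winf
  congr 1
  ext v
  constructor
  · rintro ⟨p, hp, p', hp', -, rfl⟩
    exact Set.sub_mem_sub ⟨p, hp, rfl⟩ ⟨p', hp', rfl⟩
  · rintro ⟨-, ⟨p, hp, rfl⟩, -, ⟨p', hp', rfl⟩, rfl⟩
    exact ⟨p, hp, p', hp', fun he => absurd he h, rfl⟩

theorem piV_eq_or_neg (hπb : πb x = 1 ∨ πb x = -1)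
    (h₁ : Qlow P x 1 ≤ Qhigh P x 1) (hneg : Qlow P x (-1) ≤ Qhigh P x (-1)) :
    (piV P πb x = πb x ∧ Qlow P x (-πb x) ≤ Qhigh P x (πb x)) ∨
      (piV P πb x = -πb x ∧ Qhigh P x (πb x) ≤ Qlow P x (-πb x)) := by
  unfold piV ind
  rcases hπb with hb | hb <;> simp only [hb, neg_neg] <;> split_ifs <;> grind

theorem Winf_le_Winf_piV (hπb : πb x = 1 ∨ πb x = -1) (hπ : π x = 1 ∨ π x = -1)
    (hattL : ∀ a : ℝ, a = 1 ∨ a = -1 → Qlow P x a ∈ meanOf '' P x a)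
    (hattU : ∀ a : ℝ, a = 1 ∨ a = -1 → Qhigh P x a ∈ meanOf '' P x a) :
    Winf P πb π x ≤ Winf P πb (piV P πb) x := by
  have hflip : -πb x = 1 ∨ -πb x = -1 := by rcases hπb with h | h <;> simp [h]
  have hflip_ne : -πb x ≠ πb x := by rcases hπb with h | h <;> norm_num [h]
  have hne : (P x (πb x)).Nonempty := Set.image_nonempty.1 ⟨_, hattL _ hπb⟩
  have hQ : ∀ a : ℝ, a = 1 ∨ a = -1 → Qlow P x a ≤ Qhigh P x a := fun a ha =>
    Real.sInf_le_sSup_of_mem (hattL a ha) (hattU a ha)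
  have hπ' : π x = πb x ∨ π x = -πb x := by
    rcases hπ with h | h <;> rcases hπb with h' | h' <;> simp [h, h']
  rcases piV_eq_or_neg hπb (hQ 1 (by simp)) (hQ (-1) (by simp)) with
    ⟨hV, hswitch⟩ | ⟨hV, hswitch⟩ <;> rcases hπ' with h | h
  · exact (Winf_congr (h.trans hV.symm)).le
  · rw [Winf_of_eq hV hne, Winf_of_ne (h ▸ hflip_ne), h]
    exact Real.sInf_nonpos'
      ⟨_, Set.sub_mem_sub (hattL _ hflip) (hattU _ hπb), sub_nonpos.2 hswitch⟩
  · rw [Winf_of_eq h hne, Winf_of_ne (hV ▸ hflip_ne), hV]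
    exact Real.sInf_sub_nonneg ⟨_, hattL _ hflip⟩ ⟨_, hattU _ hπb⟩ hswitch
  · exact (Winf_congr (h.trans hV.symm)).le

end Pointwise

theorem value_based_IV_improved_ITR_general
    {𝒳 : Type*} [MeasurableSpace 𝒳] (μ : Measure 𝒳)
    (P : 𝒳 → ℝ → Set (Measure ℝ)) (πb : 𝒳 → ℝ)
    (hπb : ∀ x, πb x = 1 ∨ πb x = -1)
    (hattL : ∀ x, ∀ a : ℝ, a = 1 ∨ a = -1 → ∃ p ∈ P x a, meanOf p = Qlow P x a)
    (hattU : ∀ x, ∀ a : ℝ, a = 1 ∨ a = -1 → ∃ p ∈ P x a, meanOf p = Qhigh P x a) :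
    (∀ x, ∀ π : 𝒳 → ℝ, (∀ y, π y = 1 ∨ π y = -1) →
        Winf P πb π x ≤ Winf P πb (piV P πb) x)
    ∧
    (∀ π : 𝒳 → ℝ, (∀ x, π x = 1 ∨ π x = -1) →
        Integrable (fun x => Winf P πb π x) μ →
        Integrable (fun x => Winf P πb (piV P πb) x) μ →
        ∫ x, Winf P πb π x ∂μ ≤ ∫ x, Winf P πb (piV P πb) x ∂μ) := by
  have hpointwise : ∀ x, ∀ π : 𝒳 → ℝ, (∀ y, π y = 1 ∨ π y = -1) →
      Winf P πb π x ≤ Winf P πb (piV P πb) x := fun x _ hπ =>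
    Winf_le_Winf_piV (hπb x) (hπ x) (hattL x) (hattU x)
  exact ⟨hpointwise, fun π hπ hint hintV => integral_mono hint hintV (hpointwise · π hπ)⟩

/-- Proposition 2: assuming the partial-identification bounds `Q̲(x,a)`, `Q̄(x,a)` are
attained by elements of `𝒫_{x,a}`, the ITR `π^V` pointwise maximizes `W(π,x)`, and
consequently maximizes `π ↦ E[W(π,X)]` over all Boolean ITRs for which the expectation is
defined: it is a value-based IV-improved ITR. -/
theorem value_based_IV_improved_ITR
    {𝒳 : Type*} [MeasurableSpace 𝒳] (μ : Measure 𝒳) [IsProbabilityMeasure μ]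
    (P : 𝒳 → ℝ → Set (Measure ℝ)) (πb : 𝒳 → ℝ)
    (hπb : ∀ x, πb x = 1 ∨ πb x = -1)
    (hne : ∀ x, ∀ a : ℝ, a = 1 ∨ a = -1 → (P x a).Nonempty)
    (hprob : ∀ x, ∀ a : ℝ, a = 1 ∨ a = -1 → ∀ p ∈ P x a, IsProbabilityMeasure p)
    (hmom : ∀ x, ∀ a : ℝ, a = 1 ∨ a = -1 → ∀ p ∈ P x a, Integrable (fun y : ℝ => y) p)
    (hattL : ∀ x, ∀ a : ℝ, a = 1 ∨ a = -1 → ∃ p ∈ P x a, meanOf p = Qlow P x a)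
    (hattU : ∀ x, ∀ a : ℝ, a = 1 ∨ a = -1 → ∃ p ∈ P x a, meanOf p = Qhigh P x a) :
    (∀ x, ∀ π : 𝒳 → ℝ, (∀ y, π y = 1 ∨ π y = -1) →
        Winf P πb π x ≤ Winf P πb (piV P πb) x)
    ∧
    (∀ π : 𝒳 → ℝ, (∀ x, π x = 1 ∨ π x = -1) →
        Integrable (fun x => Winf P πb π x) μ →
        Integrable (fun x => Winf P πb (piV P πb) x) μ →
        ∫ x, Winf P πb π x ∂μ ≤ ∫ x, Winf P πb (piV P πb) x ∂μ) :=
  value_based_IV_improved_ITR_general μ P πb hπb hattL hattU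

end
end

section
/- Fix a DTR π and weighting functions {λ_k(h⃗_k, a_k) ∈ [0,1]}. Assume that all the infima and suprema appearing in the recursive definitions of the weighted Q- and value functions for π are attained by elements of the corresponding constrained sets 𝒫_{h⃗_k,a_k}. Then there exists a collection of prior distributions {𝒫r_{h⃗_k,a_k}} — each a two-point distribution on 𝒫_{h⃗_k,a_k} placing mass λ_k(h⃗_k,a_k) on a worst-case witness and mass 1 − λ_k(h⃗_k,a_k) on a best-case witness — such that Q^π_{λ,k} = Q^π_{𝒫,k} and V^π_{λ,k} = V^π_{𝒫,k} for every k ∈ {1,…,K}. (Proposition 3, Part 1.) -/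
open MeasureTheory

noncomputable section

section DTR

/- Multi-stage setup: histories `H k` for stage indices `k = 0, …, K-1`
(stage `k+1` of the paper); `H K` is the terminal (post-trajectory) type.
New covariates arising after stage `k` live in `X (k+1)`, and
`concat k h a r x` is the concatenated history `(h⃗_k, a_k, r_k, x_{k+1})`.
`P k h a` is the IV-constrained set of joint laws of `(R_k, X_{k+1})`.
At the last stage the new covariate is a null quantity that is simply ignored
(the terminal value function is identically `0`). -/
variable (X : ℕ → Type) [∀ k, MeasurableSpace (X k)]
variable (H : ℕ → Type)
variable (concat : ∀ k, H k → ℝ → ℝ → X (k + 1) → H (k + 1))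
variable (P : ∀ k, H k → ℝ → Set (Measure (ℝ × X (k + 1))))

/-- `∫ (r + V'(h⃗_k, a, r, x)) dp(r,x)` for a continuation value `V'`. -/
noncomputable def contInt (k : ℕ) (h : H k) (a : ℝ) (V' : H (k + 1) → ℝ)
    (p : Measure (ℝ × X (k + 1))) : ℝ :=
  ∫ q, (q.1 + V' (concat k h a q.1 q.2)) ∂p

/-- Worst-case `Q`-function `Q̲(h⃗_k, a)` given continuation value `V'`. -/
noncomputable def QLow (k : ℕ) (h : H k) (a : ℝ) (V' : H (k + 1) → ℝ) : ℝ :=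
  sInf (contInt X H concat k h a V' '' P k h a)

/-- Best-case `Q`-function `Q̄(h⃗_k, a)` given continuation value `V'`. -/
noncomputable def QHigh (k : ℕ) (h : H k) (a : ℝ) (V' : H (k + 1) → ℝ) : ℝ :=
  sSup (contInt X H concat k h a V' '' P k h a)

/-- Weighted value function, defined by backward induction with `fuel` stages to go. -/
noncomputable def wVal (lam : ∀ k, H k → ℝ → ℝ) (π : ∀ k, H k → ℝ) :
    (fuel : ℕ) → (k : ℕ) → H k → ℝ
  | 0, _, _ => 0
  | fuel + 1, k, h =>
      lam k h (π k h) * QLow X H concat P k h (π k h) (wVal lam π fuel (k + 1))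
        + (1 - lam k h (π k h)) * QHigh X H concat P k h (π k h) (wVal lam π fuel (k + 1))

/-- Weighted value function `V^π_{λ,k}` in a `K`-stage problem (stages `k = 0, …, K-1`). -/
noncomputable def wV (K : ℕ) (lam : ∀ k, H k → ℝ → ℝ) (π : ∀ k, H k → ℝ)
    (k : ℕ) (h : H k) : ℝ :=
  wVal X H concat P lam π (K - k) k h

/-- Weighted `Q`-function `Q^π_{λ,k}(h⃗_k, a)`. -/
noncomputable def wQ (K : ℕ) (lam : ∀ k, H k → ℝ → ℝ) (π : ∀ k, H k → ℝ)
    (k : ℕ) (h : H k) (a : ℝ) : ℝ :=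
  lam k h a * QLow X H concat P k h a (wV X H concat P K lam π (k + 1))
    + (1 - lam k h a) * QHigh X H concat P k h a (wV X H concat P K lam π (k + 1))

/-- Weighted contrast `𝒞^π_{λ,k}(h⃗_k) = Q^π_{λ,k}(h⃗_k,+1) − Q^π_{λ,k}(h⃗_k,−1)`. -/
noncomputable def wC (K : ℕ) (lam : ∀ k, H k → ℝ → ℝ) (π : ∀ k, H k → ℝ)
    (k : ℕ) (h : H k) : ℝ :=
  wQ X H concat P K lam π k h 1 - wQ X H concat P K lam π k h (-1)

end DTR


section Priors

variable (X : ℕ → Type) [∀ k, MeasurableSpace (X k)]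
variable (H : ℕ → Type)
variable (concat : ∀ k, H k → ℝ → ℝ → X (k + 1) → H (k + 1))

/-- IV-constrained value function under priors `Pr` over distributions, by backward
induction with `fuel` stages to go:
`V^π_{𝒫,k}(h⃗_k) = E_{p ∼ 𝒫r_{h⃗_k, π_k(h⃗_k)}}[∫ (r + V^π_{𝒫,k+1}(h⃗_k, π_k(h⃗_k), r, x)) dp]`. -/
noncomputable def cVal (Pr : ∀ k, H k → ℝ → Measure (Measure (ℝ × X (k + 1))))
    (π : ∀ k, H k → ℝ) : (fuel : ℕ) → (k : ℕ) → H k → ℝ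
  | 0, _, _ => 0
  | fuel + 1, k, h =>
      ∫ p, contInt X H concat k h (π k h) (cVal Pr π fuel (k + 1)) p ∂(Pr k h (π k h))

/-- IV-constrained value function `V^π_{𝒫,k}` in a `K`-stage problem. -/
noncomputable def cV (K : ℕ) (Pr : ∀ k, H k → ℝ → Measure (Measure (ℝ × X (k + 1))))
    (π : ∀ k, H k → ℝ) (k : ℕ) (h : H k) : ℝ :=
  cVal X H concat Pr π (K - k) k h

/-- IV-constrained `Q`-function `Q^π_{𝒫,k}(h⃗_k, a)`. -/
noncomputable def cQ (K : ℕ) (Pr : ∀ k, H k → ℝ → Measure (Measure (ℝ × X (k + 1))))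
    (π : ∀ k, H k → ℝ) (k : ℕ) (h : H k) (a : ℝ) : ℝ :=
  ∫ p, contInt X H concat k h a (cV X H concat K Pr π (k + 1)) p ∂(Pr k h a)

end Priors

/- With a worst-case witness and a best-case witness, the two-point prior
`λ δ_{p̲} + (1 - λ) δ_{p̄}` has prior expectation `λ Q̲ + (1 - λ) Q̄`, which is exactly the weighted
`Q`-function. Once the continuation values agree, the two backward recursions therefore perform
the same step, and downward induction on the stage gives `V^π_λ = V^π_𝒫` and then `Q^π_λ = Q^π_𝒫`. -/

lemma integral_smul_dirac_add_smul_dirac {α : Type*} [MeasurableSpace α] {f : α → ℝ} (hf : Measurable f)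
    (x y : α) {c : ℝ} (hc₀ : 0 ≤ c) (hc₁ : c ≤ 1) :
    ∫ z, f z ∂(ENNReal.ofReal c • Measure.dirac x + ENNReal.ofReal (1 - c) • Measure.dirac y)
      = c * f x + (1 - c) * f y := by
  have hint : ∀ w : α, Integrable f (Measure.dirac w) := fun w =>
    integrable_dirac' hf.stronglyMeasurable enorm_lt_top
  rw [integral_add_measure ((hint x).smul_measure ENNReal.ofReal_ne_top)
      ((hint y).smul_measure ENNReal.ofReal_ne_top),
    integral_smul_measure, integral_smul_measure,
    integral_dirac' f x hf.stronglyMeasurable, integral_dirac' f y hf.stronglyMeasurable,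
    ENNReal.toReal_ofReal hc₀, ENNReal.toReal_ofReal (by linarith), smul_eq_mul, smul_eq_mul]

section BackwardInduction

variable {X : ℕ → Type} [∀ k, MeasurableSpace (X k)] {H : ℕ → Type}
  {concat : ∀ k, H k → ℝ → ℝ → X (k + 1) → H (k + 1)}
  {P : ∀ k, H k → ℝ → Set (Measure (ℝ × X (k + 1)))}
  {K : ℕ} {lam : ∀ k, H k → ℝ → ℝ} {π : ∀ k, H k → ℝ}
  {Pr : ∀ k, H k → ℝ → Measure (Measure (ℝ × X (k + 1)))}

lemma wV_of_le {k : ℕ} (hk : K ≤ k) (h : H k) : wV X H concat P K lam π k h = 0 := by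
  rw [wV, Nat.sub_eq_zero_of_le hk, wVal]

lemma cV_of_le {k : ℕ} (hk : K ≤ k) (h : H k) : cV X H concat K Pr π k h = 0 := by
  rw [cV, Nat.sub_eq_zero_of_le hk, cVal]

lemma wV_of_lt {k : ℕ} (hk : k < K) (h : H k) :
    wV X H concat P K lam π k h = wQ X H concat P K lam π k h (π k h) := by
  rw [wV, show K - k = K - (k + 1) + 1 by omega, wVal]
  rfl

lemma cV_of_lt {k : ℕ} (hk : k < K) (h : H k) :
    cV X H concat K Pr π k h = cQ X H concat K Pr π k h (π k h) := by
  rw [cV, show K - k = K - (k + 1) + 1 by omega, cVal]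
  rfl

lemma cV_eq_wV
    (hPr : ∀ k, k < K → ∀ h : H k,
      ∫ p, contInt X H concat k h (π k h) (wV X H concat P K lam π (k + 1)) p ∂(Pr k h (π k h))
        = wQ X H concat P K lam π k h (π k h))
    (k : ℕ) (h : H k) : cV X H concat K Pr π k h = wV X H concat P K lam π k h := by
  induction hn : K - k generalizing k with
  | zero => rw [cV_of_le (by omega), wV_of_le (by omega)]
  | succ n ih =>
    have hk : k < K := by omega
    have hnext : cV X H concat K Pr π (k + 1) = wV X H concat P K lam π (k + 1) :=
      funext fun h' => ih (k + 1) h' (by omega)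
    rw [cV_of_lt hk, wV_of_lt hk, cQ, hnext, hPr k hk h]

lemma cQ_eq_wQ {k : ℕ}
    (hV : ∀ h : H (k + 1), cV X H concat K Pr π (k + 1) h = wV X H concat P K lam π (k + 1) h)
    {h : H k} {a : ℝ}
    (hPr : ∫ p, contInt X H concat k h a (wV X H concat P K lam π (k + 1)) p ∂(Pr k h a)
        = wQ X H concat P K lam π k h a) :
    cQ X H concat K Pr π k h a = wQ X H concat P K lam π k h a := by
  rw [cQ, funext hV, hPr]

end BackwardInduction

theorem weighted_eq_IV_constrained_of_attained_general
    (X : ℕ → Type) [∀ k, MeasurableSpace (X k)] (H : ℕ → Type)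
    (concat : ∀ k, H k → ℝ → ℝ → X (k + 1) → H (k + 1))
    (P : ∀ k, H k → ℝ → Set (Measure (ℝ × X (k + 1))))
    (K : ℕ)
    (lam : ∀ k, H k → ℝ → ℝ)
    (hlam : ∀ k (h : H k) (a : ℝ), 0 ≤ lam k h a ∧ lam k h a ≤ 1)
    -- the fixed DTR `π`
    (π : ∀ k, H k → ℝ) (hπ : ∀ k (h : H k), π k h = 1 ∨ π k h = -1)
    -- the maps `p ↦ ∫ ⋯ dp` are measurable
    (hmeas : ∀ k (h : H k) (a : ℝ),
      Measurable (fun p : Measure (ℝ × X (k + 1)) =>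
        contInt X H concat k h a (wV X H concat P K lam π (k + 1)) p))
    -- all infima and suprema in the recursive definitions of the weighted Q- and value
    -- functions are attained by elements of the constrained sets
    (hattL : ∀ k (h : H k) (a : ℝ), a = 1 ∨ a = -1 → k < K →
      ∃ p ∈ P k h a, contInt X H concat k h a (wV X H concat P K lam π (k + 1)) p
        = QLow X H concat P k h a (wV X H concat P K lam π (k + 1)))
    (hattU : ∀ k (h : H k) (a : ℝ), a = 1 ∨ a = -1 → k < K →
      ∃ p ∈ P k h a, contInt X H concat k h a (wV X H concat P K lam π (k + 1)) p
        = QHigh X H concat P k h a (wV X H concat P K lam π (k + 1))) :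
    ∃ Pr : ∀ k, H k → ℝ → Measure (Measure (ℝ × X (k + 1))),
      (∀ k (h : H k) (a : ℝ), a = 1 ∨ a = -1 → k < K →
        ∃ pl ∈ P k h a, ∃ ph ∈ P k h a,
          Pr k h a = ENNReal.ofReal (lam k h a) • Measure.dirac pl
              + ENNReal.ofReal (1 - lam k h a) • Measure.dirac ph
          ∧ contInt X H concat k h a (wV X H concat P K lam π (k + 1)) pl
              = QLow X H concat P k h a (wV X H concat P K lam π (k + 1))
          ∧ contInt X H concat k h a (wV X H concat P K lam π (k + 1)) ph
              = QHigh X H concat P k h a (wV X H concat P K lam π (k + 1)))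
      ∧ (∀ k (h : H k), wV X H concat P K lam π k h = cV X H concat K Pr π k h)
      ∧ (∀ k, k < K → ∀ (h : H k) (a : ℝ), a = 1 ∨ a = -1 →
          wQ X H concat P K lam π k h a = cQ X H concat K Pr π k h a) := by
  choose! pl hplP hplQ using hattL
  choose! ph hphP hphQ using hattU
  set Pr : ∀ k, H k → ℝ → Measure (Measure (ℝ × X (k + 1))) := fun k h a =>
    ENNReal.ofReal (lam k h a) • Measure.dirac (pl k h a)
      + ENNReal.ofReal (1 - lam k h a) • Measure.dirac (ph k h a)
  have hPr : ∀ k, k < K → ∀ (h : H k) (a : ℝ), a = 1 ∨ a = -1 →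
      ∫ p, contInt X H concat k h a (wV X H concat P K lam π (k + 1)) p ∂(Pr k h a)
        = wQ X H concat P K lam π k h a := fun k hk h a ha => by
    rw [integral_smul_dirac_add_smul_dirac (hmeas k h a) _ _ (hlam k h a).1 (hlam k h a).2,
      hplQ k h a ha hk, hphQ k h a ha hk, wQ]
  have hV : ∀ k (h : H k), cV X H concat K Pr π k h = wV X H concat P K lam π k h :=
    cV_eq_wV fun k hk h => hPr k hk h (π k h) (hπ k h)
  refine ⟨Pr, fun k h a ha hk => ⟨pl k h a, hplP k h a ha hk, ph k h a, hphP k h a ha hk, rfl,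
    hplQ k h a ha hk, hphQ k h a ha hk⟩, fun k h => (hV k h).symm,
    fun k hk h a ha => (cQ_eq_wQ (hV (k + 1)) (hPr k hk h a ha)).symm⟩

/-- Proposition 3, Part 1 (weighted ⟹ IV-constrained): fix a DTR `π` and weighting functions
`λ_k ∈ [0,1]`, and assume all the infima and suprema in the recursive definitions of the
weighted Q- and value functions are attained by elements of the constrained sets. Then there
is a collection of priors — each a two-point distribution on `𝒫_{h⃗_k,a_k}` putting mass
`λ_k(h⃗_k,a_k)` on a worst-case witness and mass `1 − λ_k(h⃗_k,a_k)` on a best-case witness —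
under which the IV-constrained Q- and value functions coincide with the weighted ones at
every stage. -/
theorem weighted_eq_IV_constrained_of_attained
    (X : ℕ → Type) [∀ k, MeasurableSpace (X k)] (H : ℕ → Type)
    (concat : ∀ k, H k → ℝ → ℝ → X (k + 1) → H (k + 1))
    (P : ∀ k, H k → ℝ → Set (Measure (ℝ × X (k + 1))))
    (K : ℕ) (hK : 1 ≤ K)
    (lam : ∀ k, H k → ℝ → ℝ)
    (hlam : ∀ k (h : H k) (a : ℝ), 0 ≤ lam k h a ∧ lam k h a ≤ 1)
    (hPne : ∀ k (h : H k) (a : ℝ), a = 1 ∨ a = -1 → (P k h a).Nonempty)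
    (hPprob : ∀ k (h : H k) (a : ℝ), ∀ p ∈ P k h a, IsProbabilityMeasure p)
    (hInt : ∀ (π : ∀ k, H k → ℝ) k (h : H k) (a : ℝ), ∀ p ∈ P k h a,
      Integrable (fun q : ℝ × X (k + 1) =>
        q.1 + wV X H concat P K lam π (k + 1) (concat k h a q.1 q.2)) p)
    (hBddB : ∀ (π : ∀ k, H k → ℝ) k (h : H k) (a : ℝ),
      BddBelow (contInt X H concat k h a (wV X H concat P K lam π (k + 1)) '' P k h a))
    (hBddA : ∀ (π : ∀ k, H k → ℝ) k (h : H k) (a : ℝ),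
      BddAbove (contInt X H concat k h a (wV X H concat P K lam π (k + 1)) '' P k h a))
    -- the fixed DTR `π`
    (π : ∀ k, H k → ℝ) (hπ : ∀ k (h : H k), π k h = 1 ∨ π k h = -1)
    -- the maps `p ↦ ∫ ⋯ dp` are measurable
    (hmeas : ∀ k (h : H k) (a : ℝ),
      Measurable (fun p : Measure (ℝ × X (k + 1)) =>
        contInt X H concat k h a (wV X H concat P K lam π (k + 1)) p))
    -- all infima and suprema in the recursive definitions of the weighted Q- and value
    -- functions are attained by elements of the constrained sets
    (hattL : ∀ k (h : H k) (a : ℝ), a = 1 ∨ a = -1 → k < K →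
      ∃ p ∈ P k h a, contInt X H concat k h a (wV X H concat P K lam π (k + 1)) p
        = QLow X H concat P k h a (wV X H concat P K lam π (k + 1)))
    (hattU : ∀ k (h : H k) (a : ℝ), a = 1 ∨ a = -1 → k < K →
      ∃ p ∈ P k h a, contInt X H concat k h a (wV X H concat P K lam π (k + 1)) p
        = QHigh X H concat P k h a (wV X H concat P K lam π (k + 1))) :
    ∃ Pr : ∀ k, H k → ℝ → Measure (Measure (ℝ × X (k + 1))),
      (∀ k (h : H k) (a : ℝ), a = 1 ∨ a = -1 → k < K →
        ∃ pl ∈ P k h a, ∃ ph ∈ P k h a,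
          Pr k h a = ENNReal.ofReal (lam k h a) • Measure.dirac pl
              + ENNReal.ofReal (1 - lam k h a) • Measure.dirac ph
          ∧ contInt X H concat k h a (wV X H concat P K lam π (k + 1)) pl
              = QLow X H concat P k h a (wV X H concat P K lam π (k + 1))
          ∧ contInt X H concat k h a (wV X H concat P K lam π (k + 1)) ph
              = QHigh X H concat P k h a (wV X H concat P K lam π (k + 1)))
      ∧ (∀ k (h : H k), wV X H concat P K lam π k h = cV X H concat K Pr π k h)
      ∧ (∀ k, k < K → ∀ (h : H k) (a : ℝ), a = 1 ∨ a = -1 →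
          wQ X H concat P K lam π k h a = cQ X H concat K Pr π k h a) :=
  weighted_eq_IV_constrained_of_attained_general X H concat P K lam hlam π hπ hmeas hattL hattU
end
end

section
/- Assume all infima and suprema appearing in the recursive definitions of the weighted Q- and value functions are attained by elements of the constrained sets. Define π* recursively for k = K, K−1, …, 1 by π*_k(h⃗_k) = sgn(𝒞^{π*}_{λ,k}(h⃗_k)) whenever 𝒞^{π*}_{λ,k}(h⃗_k) ≠ 0, with an arbitrary choice in {−1,+1} when 𝒞^{π*}_{λ,k}(h⃗_k) = 0 (well-defined since 𝒞^{π*}_{λ,k} depends on π* only through π*_{(k+1):K}). Then for every stage k ∈ {1,…,K}, every history h⃗_k ∈ 𝓗_k, and every DTR π, V^{π*}_{λ,k}(h⃗_k) ≥ V^π_{λ,k}(h⃗_k); in particular π* is an IV-optimal DTR when the policy class consists of all DTRs. (Corollary 1: alternative characterization of the IV-optimal DTR.) -/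
open MeasureTheory

noncomputable section

/-! Backward induction on the stage. The weighted `Q`-function is monotone in the continuation
value: the infimum and the supremum of the integrals `∫ (r + V) dp` over the constrained set are,
and `λ ∈ [0, 1]` mixes them with nonnegative weights. So once `π⋆` dominates every `π` from stage
`k + 1` on, `Q^π_k(h, π_k h) ≤ Q^{π⋆}_k(h, π_k h)`, and the last term is at most
`Q^{π⋆}_k(h, π⋆_k h)` because `π⋆` picks the action with the larger weighted `Q`-value. -/

theorem le_of_sign_choice {q : ℝ → ℝ} {a b : ℝ} (ha : a = 1 ∨ a = -1) (hb : b = 1 ∨ b = -1)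
    (hpos : 0 < q 1 - q (-1) → b = 1) (hneg : q 1 - q (-1) < 0 → b = -1) : q a ≤ q b := by
  rcases ha with rfl | rfl <;> rcases hb with rfl | rfl
  · rfl
  · exact not_lt.1 fun hlt => absurd (hpos (sub_pos.2 hlt)) (by norm_num)
  · exact not_lt.1 fun hlt => absurd (hneg (sub_neg.2 hlt)) (by norm_num)
  · rfl

section WeightedValue

variable {X : ℕ → Type} [∀ k, MeasurableSpace (X k)] {H : ℕ → Type}
  {concat : ∀ k, H k → ℝ → ℝ → X (k + 1) → H (k + 1)}
  {P : ∀ k, H k → ℝ → Set (Measure (ℝ × X (k + 1)))}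

theorem contInt_mono {k : ℕ} {h : H k} {a : ℝ} {V V' : H (k + 1) → ℝ} (hVV' : V ≤ V')
    {p : Measure (ℝ × X (k + 1))}
    (hV : Integrable (fun q : ℝ × X (k + 1) => q.1 + V (concat k h a q.1 q.2)) p)
    (hV' : Integrable (fun q : ℝ × X (k + 1) => q.1 + V' (concat k h a q.1 q.2)) p) :
    contInt X H concat k h a V p ≤ contInt X H concat k h a V' p :=
  integral_mono hV hV' fun _ => add_le_add le_rfl (hVV' _)

theorem QLow_mono {k : ℕ} {h : H k} {a : ℝ} {V V' : H (k + 1) → ℝ} (hne : (P k h a).Nonempty)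
    (hbdd : BddBelow (contInt X H concat k h a V '' P k h a))
    (hle : ∀ p ∈ P k h a, contInt X H concat k h a V p ≤ contInt X H concat k h a V' p) :
    QLow X H concat P k h a V ≤ QLow X H concat P k h a V' := by
  refine le_csInf (hne.image _) ?_
  rintro _ ⟨p, hp, rfl⟩
  exact (csInf_le hbdd ⟨p, hp, rfl⟩).trans (hle p hp)

theorem QHigh_mono {k : ℕ} {h : H k} {a : ℝ} {V V' : H (k + 1) → ℝ} (hne : (P k h a).Nonempty)
    (hbdd : BddAbove (contInt X H concat k h a V' '' P k h a))
    (hle : ∀ p ∈ P k h a, contInt X H concat k h a V p ≤ contInt X H concat k h a V' p) :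
    QHigh X H concat P k h a V ≤ QHigh X H concat P k h a V' := by
  refine csSup_le (hne.image _) ?_
  rintro _ ⟨p, hp, rfl⟩
  exact (hle p hp).trans (le_csSup hbdd ⟨p, hp, rfl⟩)

variable {K : ℕ} {lam : ∀ k, H k → ℝ → ℝ}

@[simp]
theorem wV_self (π : ∀ k, H k → ℝ) (h : H K) : wV X H concat P K lam π K h = 0 := by
  simp [wV, wVal]

theorem wV_eq_wQ {k : ℕ} (hk : k < K) (π : ∀ k, H k → ℝ) (h : H k) :
    wV X H concat P K lam π k h = wQ X H concat P K lam π k h (π k h) := by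
  rw [wV, wQ, show K - k = K - (k + 1) + 1 by omega]
  rfl

theorem wQ_mono {k : ℕ} {h : H k} {a : ℝ} {π π' : ∀ j, H j → ℝ}
    (hlam : 0 ≤ lam k h a ∧ lam k h a ≤ 1) (hne : (P k h a).Nonempty)
    (hint : ∀ p ∈ P k h a, Integrable (fun q : ℝ × X (k + 1) =>
      q.1 + wV X H concat P K lam π (k + 1) (concat k h a q.1 q.2)) p)
    (hint' : ∀ p ∈ P k h a, Integrable (fun q : ℝ × X (k + 1) =>
      q.1 + wV X H concat P K lam π' (k + 1) (concat k h a q.1 q.2)) p)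
    (hbdd : BddBelow (contInt X H concat k h a (wV X H concat P K lam π (k + 1)) '' P k h a))
    (hbdd' : BddAbove (contInt X H concat k h a (wV X H concat P K lam π' (k + 1)) '' P k h a))
    (hV : wV X H concat P K lam π (k + 1) ≤ wV X H concat P K lam π' (k + 1)) :
    wQ X H concat P K lam π k h a ≤ wQ X H concat P K lam π' k h a := by
  have hle : ∀ p ∈ P k h a, contInt X H concat k h a (wV X H concat P K lam π (k + 1)) p
      ≤ contInt X H concat k h a (wV X H concat P K lam π' (k + 1)) p :=
    fun p hp => contInt_mono hV (hint p hp) (hint' p hp)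
  exact add_le_add (mul_le_mul_of_nonneg_left (QLow_mono hne hbdd hle) hlam.1)
    (mul_le_mul_of_nonneg_left (QHigh_mono hne hbdd' hle) (sub_nonneg.2 hlam.2))

end WeightedValue

theorem alternative_characterization_IV_optimal_DTR_general
    (X : ℕ → Type) [∀ k, MeasurableSpace (X k)] (H : ℕ → Type)
    (concat : ∀ k, H k → ℝ → ℝ → X (k + 1) → H (k + 1))
    (P : ∀ k, H k → ℝ → Set (Measure (ℝ × X (k + 1))))
    (K : ℕ)
    (lam : ∀ k, H k → ℝ → ℝ)
    (hlam : ∀ k (h : H k) (a : ℝ), 0 ≤ lam k h a ∧ lam k h a ≤ 1)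
    (hPne : ∀ k (h : H k) (a : ℝ), a = 1 ∨ a = -1 → (P k h a).Nonempty)
    (hInt : ∀ (π : ∀ k, H k → ℝ) k (h : H k) (a : ℝ), ∀ p ∈ P k h a,
      Integrable (fun q : ℝ × X (k + 1) =>
        q.1 + wV X H concat P K lam π (k + 1) (concat k h a q.1 q.2)) p)
    (hBddB : ∀ (π : ∀ k, H k → ℝ) k (h : H k) (a : ℝ),
      BddBelow (contInt X H concat k h a (wV X H concat P K lam π (k + 1)) '' P k h a))
    (hBddA : ∀ (π : ∀ k, H k → ℝ) k (h : H k) (a : ℝ),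
      BddAbove (contInt X H concat k h a (wV X H concat P K lam π (k + 1)) '' P k h a))
    -- `π⋆` takes the sign of its own weighted contrast, arbitrary in `{−1,+1}` on ties
    (πstar : ∀ k, H k → ℝ)
    (hπstar_pm : ∀ k (h : H k), πstar k h = 1 ∨ πstar k h = -1)
    (hπstar_sgn : ∀ k, k < K → ∀ h : H k,
      (0 < wC X H concat P K lam πstar k h → πstar k h = 1) ∧
      (wC X H concat P K lam πstar k h < 0 → πstar k h = -1)) :
    ∀ k, k < K → ∀ h : H k, ∀ π : ∀ j, H j → ℝ,
      (∀ j (hj : H j), π j hj = 1 ∨ π j hj = -1) →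
      wV X H concat P K lam π k h ≤ wV X H concat P K lam πstar k h := by
  intro k hk h π hπ
  suffices hdom : ∀ j ≤ K, ∀ h' : H j,
      wV X H concat P K lam π j h' ≤ wV X H concat P K lam πstar j h' from hdom k hk.le h
  intro j hj
  induction hj using Nat.decreasingInduction with
  | self => simp
  | of_succ j hj ih =>
    intro h'
    rw [wV_eq_wQ hj, wV_eq_wQ hj]
    calc wQ X H concat P K lam π j h' (π j h')
        ≤ wQ X H concat P K lam πstar j h' (π j h') :=
          wQ_mono (hlam j h' _) (hPne j h' _ (hπ j h')) (hInt π j h' _) (hInt πstar j h' _)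
            (hBddB π j h' _) (hBddA πstar j h' _) ih
      _ ≤ wQ X H concat P K lam πstar j h' (πstar j h') :=
          le_of_sign_choice (hπ j h') (hπstar_pm j h') (hπstar_sgn j hj h').1
            (hπstar_sgn j hj h').2

/-- Corollary 1 (alternative characterization of the IV-optimal DTR): assuming all infima and
suprema in the recursive definitions of the weighted Q- and value functions are attained,
any DTR `π⋆` taking the sign of its own weighted contrast at every stage (with an arbitrary
choice in `{−1,+1}` on ties) maximizes the weighted value function at every stage `k` and
every history, over all (Boolean) DTRs. -/
theorem alternative_characterization_IV_optimal_DTR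
    (X : ℕ → Type) [∀ k, MeasurableSpace (X k)] (H : ℕ → Type)
    (concat : ∀ k, H k → ℝ → ℝ → X (k + 1) → H (k + 1))
    (P : ∀ k, H k → ℝ → Set (Measure (ℝ × X (k + 1))))
    (K : ℕ) (hK : 1 ≤ K)
    (lam : ∀ k, H k → ℝ → ℝ)
    (hlam : ∀ k (h : H k) (a : ℝ), 0 ≤ lam k h a ∧ lam k h a ≤ 1)
    (hPne : ∀ k (h : H k) (a : ℝ), a = 1 ∨ a = -1 → (P k h a).Nonempty)
    (hPprob : ∀ k (h : H k) (a : ℝ), ∀ p ∈ P k h a, IsProbabilityMeasure p)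
    (hInt : ∀ (π : ∀ k, H k → ℝ) k (h : H k) (a : ℝ), ∀ p ∈ P k h a,
      Integrable (fun q : ℝ × X (k + 1) =>
        q.1 + wV X H concat P K lam π (k + 1) (concat k h a q.1 q.2)) p)
    (hBddB : ∀ (π : ∀ k, H k → ℝ) k (h : H k) (a : ℝ),
      BddBelow (contInt X H concat k h a (wV X H concat P K lam π (k + 1)) '' P k h a))
    (hBddA : ∀ (π : ∀ k, H k → ℝ) k (h : H k) (a : ℝ),
      BddAbove (contInt X H concat k h a (wV X H concat P K lam π (k + 1)) '' P k h a))
    -- attainment of all infima and suprema in the recursive definitions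
    (hattL : ∀ (π : ∀ k, H k → ℝ) k (h : H k) (a : ℝ), a = 1 ∨ a = -1 → k < K →
      ∃ p ∈ P k h a, contInt X H concat k h a (wV X H concat P K lam π (k + 1)) p
        = QLow X H concat P k h a (wV X H concat P K lam π (k + 1)))
    (hattU : ∀ (π : ∀ k, H k → ℝ) k (h : H k) (a : ℝ), a = 1 ∨ a = -1 → k < K →
      ∃ p ∈ P k h a, contInt X H concat k h a (wV X H concat P K lam π (k + 1)) p
        = QHigh X H concat P k h a (wV X H concat P K lam π (k + 1)))
    -- `π⋆` takes the sign of its own weighted contrast, arbitrary in `{−1,+1}` on ties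
    (πstar : ∀ k, H k → ℝ)
    (hπstar_pm : ∀ k (h : H k), πstar k h = 1 ∨ πstar k h = -1)
    (hπstar_sgn : ∀ k, k < K → ∀ h : H k,
      (0 < wC X H concat P K lam πstar k h → πstar k h = 1) ∧
      (wC X H concat P K lam πstar k h < 0 → πstar k h = -1)) :
    ∀ k, k < K → ∀ h : H k, ∀ π : ∀ j, H j → ℝ,
      (∀ j (hj : H j), π j hj = 1 ∨ π j hj = -1) →
      wV X H concat P K lam π k h ≤ wV X H concat P K lam πstar k h :=
  alternative_characterization_IV_optimal_DTR_general X H concat P K lam hlam hPne hInt hBddB hBddA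
    πstar hπstar_pm hπstar_sgn

end
end

section
/- Peeling lemma for policy estimation: for any three DTRs π, π', π'', any stage k ∈ {1,…,K−1}, and any history h⃗_k ∈ 𝓗_k, writing a_k = π_k(h⃗_k), the weighted value functions satisfy V^{π_k π'_{(k+1):K}}_{λ,k}(h⃗_k) − V^{π_k π''_{(k+1):K}}_{λ,k}(h⃗_k) ≤ sup_{p ∈ 𝒫_{h⃗_k, a_k}} ∫ [ V^{π'_{(k+1):K}}_{λ,k+1}(h⃗_k, a_k, r, x) − V^{π''_{(k+1):K}}_{λ,k+1}(h⃗_k, a_k, r, x) ] dp(r, x). (Supplementary peeling lemma.) -/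
open MeasureTheory

noncomputable section

/-- The DTR that acts according to `π1` at stage `k` and according to `π2` at the other
stages (only its behavior at stages `≥ k` matters for stage-`k` value functions). -/
def mixAt (H : ℕ → Type) (π1 π2 : ∀ k, H k → ℝ) (k : ℕ) : ∀ j, H j → ℝ :=
  fun j => if j = k then π1 j else π2 j

/-! The two mixed policies agree at stage `k`, so both values are the same
`λ`-weighted combination of the lower and upper robust `Q`-functions at `a_k = π_k(h⃗_k)`, taken
once with continuation `V' = V^{π'}_{λ,k+1}` and once with `V'' = V^{π''}_{λ,k+1}`. Writing `S`
for the supremum on the right, every `p ∈ 𝒫` has `∫ (r + V') dp ≤ ∫ (r + V'') dp + S`; passing to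
the infimum and to the supremum over `𝒫` bounds both differences of `Q`-functions by `S`, and
so does their convex combination. -/

section ImageBounds

variable {ι α : Type*} [ConditionallyCompleteLinearOrder α] [AddCommGroup α]
  [IsOrderedAddMonoid α] {s : Set ι} {f g : ι → α}

lemma bddAbove_image_sub (hf : BddAbove (f '' s)) (hg : BddBelow (g '' s)) :
    BddAbove ((f - g) '' s) := by
  obtain ⟨a, ha⟩ := hf
  obtain ⟨b, hb⟩ := hg
  refine ⟨a - b, ?_⟩
  rintro _ ⟨i, hi, rfl⟩
  exact sub_le_sub (ha ⟨i, hi, rfl⟩) (hb ⟨i, hi, rfl⟩)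

lemma csInf_image_sub_csInf_image_le (hs : s.Nonempty) (hf : BddBelow (f '' s))
    (hfg : BddAbove ((f - g) '' s)) :
    sInf (f '' s) - sInf (g '' s) ≤ sSup ((f - g) '' s) := by
  rw [sub_le_comm]
  refine le_csInf (hs.image g) ?_
  rintro _ ⟨i, hi, rfl⟩
  calc sInf (f '' s) - sSup ((f - g) '' s) ≤ f i - (f i - g i) :=
        sub_le_sub (csInf_le hf ⟨i, hi, rfl⟩) (le_csSup hfg ⟨i, hi, rfl⟩)
    _ = g i := sub_sub_cancel _ _

lemma csSup_image_sub_csSup_image_le (hs : s.Nonempty) (hg : BddAbove (g '' s))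
    (hfg : BddAbove ((f - g) '' s)) :
    sSup (f '' s) - sSup (g '' s) ≤ sSup ((f - g) '' s) := by
  rw [sub_le_iff_le_add']
  refine csSup_le (hs.image f) ?_
  rintro _ ⟨i, hi, rfl⟩
  calc f i = g i + (f i - g i) := (add_sub_cancel _ _).symm
    _ ≤ sSup (g '' s) + sSup ((f - g) '' s) :=
        add_le_add (le_csSup hg ⟨i, hi, rfl⟩) (le_csSup hfg ⟨i, hi, rfl⟩)

end ImageBounds

lemma weighted_infSup_sub_le {ι : Type*} {s : Set ι} {f g : ι → ℝ} {l : ℝ}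
    (hl₀ : 0 ≤ l) (hl₁ : l ≤ 1) (hs : s.Nonempty)
    (hf₀ : BddBelow (f '' s)) (hf₁ : BddAbove (f '' s))
    (hg₀ : BddBelow (g '' s)) (hg₁ : BddAbove (g '' s)) :
    l * sInf (f '' s) + (1 - l) * sSup (f '' s) - (l * sInf (g '' s) + (1 - l) * sSup (g '' s))
      ≤ sSup ((f - g) '' s) := by
  have hfg := bddAbove_image_sub hf₁ hg₀
  have hInf := csInf_image_sub_csInf_image_le hs hf₀ hfg
  have hSup := csSup_image_sub_csSup_image_le hs hg₁ hfg
  have := mul_le_mul_of_nonneg_left hInf hl₀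
  have := mul_le_mul_of_nonneg_left hSup (sub_nonneg.2 hl₁)
  linarith

section DTR

variable {X : ℕ → Type} [∀ k, MeasurableSpace (X k)] {H : ℕ → Type}
  {concat : ∀ k, H k → ℝ → ℝ → X (k + 1) → H (k + 1)}
  {P : ∀ k, H k → ℝ → Set (Measure (ℝ × X (k + 1)))}

lemma wVal_congr (lam : ∀ k, H k → ℝ → ℝ) {π₁ π₂ : ∀ k, H k → ℝ} (fuel : ℕ) {k : ℕ}
    (hπ : ∀ j, k ≤ j → π₁ j = π₂ j) :
    wVal X H concat P lam π₁ fuel k = wVal X H concat P lam π₂ fuel k := by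
  induction fuel generalizing k with
  | zero => rfl
  | succ n ih =>
    funext h
    simp only [wVal, hπ k le_rfl, ih fun j hj => hπ j (Nat.le_of_succ_le hj)]

lemma wV_mixAt {K k : ℕ} (hk : k < K) (lam : ∀ k, H k → ℝ → ℝ) (π₁ π₂ : ∀ k, H k → ℝ)
    (h : H k) :
    wV X H concat P K lam (mixAt H π₁ π₂ k) k h = wQ X H concat P K lam π₂ k h (π₁ k h) := by
  have hfuel : K - k = K - (k + 1) + 1 := by omega
  have hcont : wVal X H concat P lam (mixAt H π₁ π₂ k) (K - (k + 1)) (k + 1)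
      = wV X H concat P K lam π₂ (k + 1) :=
    wVal_congr lam _ fun j hj => if_neg (Nat.ne_of_gt hj)
  simp only [wV, hfuel, wVal, hcont, mixAt]
  rfl

lemma contInt_sub_contInt {k : ℕ} {h : H k} {a : ℝ} {V₁ V₂ : H (k + 1) → ℝ}
    {p : Measure (ℝ × X (k + 1))}
    (h₁ : Integrable (fun q : ℝ × X (k + 1) => q.1 + V₁ (concat k h a q.1 q.2)) p)
    (h₂ : Integrable (fun q : ℝ × X (k + 1) => q.1 + V₂ (concat k h a q.1 q.2)) p) :
    contInt X H concat k h a V₁ p - contInt X H concat k h a V₂ p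
      = ∫ q, (V₁ (concat k h a q.1 q.2) - V₂ (concat k h a q.1 q.2)) ∂p := by
  rw [contInt, contInt, ← integral_sub h₁ h₂]
  simp only [add_sub_add_left_eq_sub]

end DTR

theorem peeling_policy_estimation_general
    (X : ℕ → Type) [∀ k, MeasurableSpace (X k)] (H : ℕ → Type)
    (concat : ∀ k, H k → ℝ → ℝ → X (k + 1) → H (k + 1))
    (P : ∀ k, H k → ℝ → Set (Measure (ℝ × X (k + 1))))
    (K : ℕ) (lam : ∀ k, H k → ℝ → ℝ)
    (hlam : ∀ k (h : H k) (a : ℝ), 0 ≤ lam k h a ∧ lam k h a ≤ 1)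
    (hPne : ∀ k (h : H k) (a : ℝ), a = 1 ∨ a = -1 → (P k h a).Nonempty)
    (hInt : ∀ (π : ∀ k, H k → ℝ) k (h : H k) (a : ℝ), ∀ p ∈ P k h a,
      Integrable (fun q : ℝ × X (k + 1) =>
        q.1 + wV X H concat P K lam π (k + 1) (concat k h a q.1 q.2)) p)
    (hBddB : ∀ (π : ∀ k, H k → ℝ) k (h : H k) (a : ℝ),
      BddBelow (contInt X H concat k h a (wV X H concat P K lam π (k + 1)) '' P k h a))
    (hBddA : ∀ (π : ∀ k, H k → ℝ) k (h : H k) (a : ℝ),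
      BddAbove (contInt X H concat k h a (wV X H concat P K lam π (k + 1)) '' P k h a))
    (π π' π'' : ∀ k, H k → ℝ)
    (hπ : ∀ k (h : H k), π k h = 1 ∨ π k h = -1)
    (k : ℕ) (hk : k + 1 < K) (h : H k) :
    wV X H concat P K lam (mixAt H π π' k) k h
        - wV X H concat P K lam (mixAt H π π'' k) k h
      ≤ sSup ((fun p : Measure (ℝ × X (k + 1)) =>
          ∫ q, (wV X H concat P K lam π' (k + 1) (concat k h (π k h) q.1 q.2)
            - wV X H concat P K lam π'' (k + 1) (concat k h (π k h) q.1 q.2)) ∂p)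
          '' P k h (π k h)) := by
  have hne := hPne k h (π k h) (hπ k h)
  rw [wV_mixAt (by omega), wV_mixAt (by omega),
    ← Set.image_congr fun p hp => contInt_sub_contInt (hInt π' k h _ p hp) (hInt π'' k h _ p hp)]
  exact weighted_infSup_sub_le (hlam k h _).1 (hlam k h _).2 hne
    (hBddB π' k h _) (hBddA π' k h _) (hBddB π'' k h _) (hBddA π'' k h _)

/-- Supplementary peeling lemma for policy estimation: for DTRs `π, π', π''` and any stage
`k ∈ {1,…,K−1}`, writing `a_k = π_k(h⃗_k)`,
`V^{π_k π'_{(k+1):K}}_{λ,k}(h⃗_k) − V^{π_k π''_{(k+1):K}}_{λ,k}(h⃗_k)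
  ≤ sup_{p ∈ 𝒫_{h⃗_k,a_k}} ∫ [V^{π'}_{λ,k+1}(h⃗_k,a_k,r,x) − V^{π''}_{λ,k+1}(h⃗_k,a_k,r,x)] dp`. -/
theorem peeling_policy_estimation
    (X : ℕ → Type) [∀ k, MeasurableSpace (X k)] (H : ℕ → Type)
    (concat : ∀ k, H k → ℝ → ℝ → X (k + 1) → H (k + 1))
    (P : ∀ k, H k → ℝ → Set (Measure (ℝ × X (k + 1))))
    (K : ℕ) (lam : ∀ k, H k → ℝ → ℝ)
    (hlam : ∀ k (h : H k) (a : ℝ), 0 ≤ lam k h a ∧ lam k h a ≤ 1)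
    (hPne : ∀ k (h : H k) (a : ℝ), a = 1 ∨ a = -1 → (P k h a).Nonempty)
    (hPprob : ∀ k (h : H k) (a : ℝ), ∀ p ∈ P k h a, IsProbabilityMeasure p)
    (hInt : ∀ (π : ∀ k, H k → ℝ) k (h : H k) (a : ℝ), ∀ p ∈ P k h a,
      Integrable (fun q : ℝ × X (k + 1) =>
        q.1 + wV X H concat P K lam π (k + 1) (concat k h a q.1 q.2)) p)
    (hBddB : ∀ (π : ∀ k, H k → ℝ) k (h : H k) (a : ℝ),
      BddBelow (contInt X H concat k h a (wV X H concat P K lam π (k + 1)) '' P k h a))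
    (hBddA : ∀ (π : ∀ k, H k → ℝ) k (h : H k) (a : ℝ),
      BddAbove (contInt X H concat k h a (wV X H concat P K lam π (k + 1)) '' P k h a))
    (π π' π'' : ∀ k, H k → ℝ)
    (hπ : ∀ k (h : H k), π k h = 1 ∨ π k h = -1)
    (hπ' : ∀ k (h : H k), π' k h = 1 ∨ π' k h = -1)
    (hπ'' : ∀ k (h : H k), π'' k h = 1 ∨ π'' k h = -1)
    (k : ℕ) (hk : k + 1 < K) (h : H k) :
    wV X H concat P K lam (mixAt H π π' k) k h
        - wV X H concat P K lam (mixAt H π π'' k) k h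
      ≤ sSup ((fun p : Measure (ℝ × X (k + 1)) =>
          ∫ q, (wV X H concat P K lam π' (k + 1) (concat k h (π k h) q.1 q.2)
            - wV X H concat P K lam π'' (k + 1) (concat k h (π k h) q.1 q.2)) ∂p)
          '' P k h (π k h)) :=
  peeling_policy_estimation_general X H concat P K lam hlam hPne hInt hBddB hBddA π π' π'' hπ k hk h

end
end
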